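/- Let 2 ≤ p < ∞, A ∈ ℝ^{n×d}, b ∈ ℝⁿ, C ∈ ℝ^{d×d}, v ∈ ℝ^d, OPT = min_{Cz=v} ‖Az − b‖_p^p, and let α ≥ 1 and λ ∈ (0,1] with λ^{min{1, p−1}} ≤ (p−1)/(p·4^p). Let x⁽⁰⁾ minimize ‖Ax − b‖₂² subject to Cx = v, and for each t let x⁽ᵗ⁺¹⁾ = x⁽ᵗ⁾ − λ·Δ̃⁽ᵗ⁾, where Δ̃⁽ᵗ⁾ is an α-approximate solution to the residual problem at x⁽ᵗ⁾. Then for every t ≥ 0, ‖Ax⁽ᵗ⁾ − b‖_p^p − OPT ≤ (1 − λ/α)^t · (n^{(p−2)/2} − 1) · OPT. -/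

import Mathlib

open Matrix Finset

/-- The smoothed `p`-norm function `γ_p(t,x)`. -/
noncomputable def gammaFn (p t x : ℝ) : ℝ :=
  if |x| ≤ t then (p / 2) * t ^ (p - 2) * x ^ 2
  else |x| ^ p + (p / 2 - 1) * t ^ p

/-- Objective of the residual problem at `x` for `min_{Cx=v} ‖Ax−b‖_p^p`:
`Δ ↦ gᵀAΔ − ((p−1)/(p·2^p))·γ_p(|Ax−b|, AΔ)` where
`g = p(|Ax−b|^{p−2} ⊙ (Ax−b))`. -/
noncomputable def resObj {n d : ℕ} (p : ℝ) (A : Matrix (Fin n) (Fin d) ℝ)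
    (b : Fin n → ℝ) (x : Fin d → ℝ) (Δ : Fin d → ℝ) : ℝ :=
  (∑ i, (p * |(A.mulVec x - b) i| ^ (p - 2) * (A.mulVec x - b) i) * (A.mulVec Δ) i)
    - ((p - 1) / (p * 2 ^ p))
        * ∑ i, gammaFn p (|(A.mulVec x - b) i|) ((A.mulVec Δ) i)

/-!
Write `r = Ax - b`, `f(x) = ‖r‖_p^p` and `κ = (p-1)/(p·2^p)`. Coordinatewise, `|r + δ|^p` lies
between its first-order expansion plus `κ·γ_p(|r|, δ)` and the same expansion plus
`2^p·γ_p(|r|, δ)`; by homogeneity both bounds reduce to `r = 1`, where they are one-variable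
inequalities for `(1 ± e)^p`. The lower bound, applied at `Δ = x - z*` for a minimizer `z*`,
shows that the residual problem has value at least `f(x) - OPT`. The upper bound, together with
`γ_p(t, λy) ≤ λ²γ_p(t, y)` and `2^p λ ≤ κ`, shows that the step `x - λΔ̃` decreases `f` by at
least `λ` times the residual objective of `Δ̃`, hence by `(λ/α)(f(x) - OPT)`. Finally the
least-squares start satisfies `‖r₀‖_p^p ≤ ‖r₀‖_2^p ≤ ‖r*‖_2^p ≤ n^{(p-2)/2} ‖r*‖_p^p`.
-/

lemma sq_rpow_div_two (u p : ℝ) : (u ^ 2) ^ (p / 2) = |u| ^ p := by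
  rw [← sq_abs, ← Real.rpow_natCast_mul (abs_nonneg u)]
  norm_num [mul_div_cancel₀]

lemma one_add_mul_one_sub_le_rpow_neg {w : ℝ} (hw : 0 < w) {r : ℝ} (hr : 0 ≤ r) :
    1 + r * (1 - w) ≤ w ^ (-r) := by
  have hlog := Real.log_le_sub_one_of_pos hw
  rw [Real.rpow_def_of_pos hw]
  nlinarith [Real.add_one_le_exp (Real.log w * -r)]

lemma one_add_le_two_rpow {p : ℝ} (hp : 2 ≤ p) : 1 + p ≤ 2 ^ p := by
  simpa [one_add_one_eq_two] using
    one_add_mul_self_le_rpow_one_add (s := 1) (by norm_num) (p := p) (by linarith)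

lemma div_mul_two_rpow_le_quarter {p : ℝ} (hp : 2 ≤ p) : (p - 1) / (p * 2 ^ p) ≤ 1 / 4 := by
  have h4 : (4:ℝ) ≤ 2 ^ p := by
    have := Real.rpow_le_rpow_of_exponent_le (x := 2) one_le_two hp
    rwa [Real.rpow_two, show (2:ℝ) ^ 2 = 4 by norm_num] at this
  rw [div_le_div_iff₀ (by positivity) (by norm_num)]
  nlinarith

lemma rpow_add_le_two_rpow_mul {p : ℝ} (hp : 1 ≤ p) {a b : ℝ} (ha : 0 ≤ a) (hb : 0 ≤ b) :
    (a + b) ^ p ≤ 2 ^ (p - 1) * (a ^ p + b ^ p) := by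
  have := NNReal.rpow_add_le_mul_rpow_add_rpow ⟨a, ha⟩ ⟨b, hb⟩ hp
  exact_mod_cast this

lemma rpow_add_mul_rpow_sub_one_le_one_add_rpow {p : ℝ} (hp : 1 ≤ p) {x : ℝ} (hx : 0 < x) :
    x ^ p + p * x ^ (p - 1) ≤ (1 + x) ^ p := by
  have h := one_add_mul_self_le_rpow_one_add (s := 1 / x) (by linarith [one_div_pos.mpr hx]) hp
  have hxp := Real.rpow_pos_of_pos hx p
  calc x ^ p + p * x ^ (p - 1) = x ^ p * (1 + p * (1 / x)) := by
        rw [Real.rpow_sub_one hx.ne']; field_simp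
    _ ≤ x ^ p * (1 + 1 / x) ^ p := mul_le_mul_of_nonneg_left h hxp.le
    _ = (1 + x) ^ p := by
        rw [← Real.mul_rpow hx.le (by positivity)]; congr 1; field_simp; ring

lemma hasDerivAt_one_add_mul_rpow_sub_quadratic (p s c y : ℝ) (hp : 1 ≤ p) :
    HasDerivAt (fun z => (1 + s * z) ^ p - (1 + s * p * z + c * z ^ 2))
      (s * p * (1 + s * y) ^ (p - 1) - s * p - 2 * c * y) y := by
  have hlin := ((hasDerivAt_id' y).const_mul s).const_add 1
  have hquad := (((hasDerivAt_id' y).const_mul (s * p)).const_add 1).add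
    ((hasDerivAt_pow 2 y).const_mul c)
  exact ((hlin.rpow_const (Or.inr hp)).sub hquad).congr_deriv (by push_cast; ring)

lemma le_of_hasDerivAt_of_nonneg {f f' : ℝ → ℝ} (hf : ∀ y, HasDerivAt f (f' y) y) {x : ℝ}
    (hx : 0 ≤ x) (hf' : ∀ y ∈ Set.Ioo 0 x, 0 ≤ f' y) : f 0 ≤ f x :=
  monotoneOn_of_hasDerivWithinAt_nonneg (convex_Icc 0 x)
    (fun y _ => (hf y).continuousAt.continuousWithinAt) (fun y _ => (hf y).hasDerivWithinAt)
    (by simpa only [interior_Icc] using hf') ⟨le_rfl, hx⟩ ⟨hx, le_rfl⟩ hx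

lemma quadratic_le_one_add_rpow {p : ℝ} (hp : 2 ≤ p) {x : ℝ} (hx : 0 ≤ x) :
    1 + p * x + p * (p - 1) / 2 * x ^ 2 ≤ (1 + x) ^ p := by
  have h := le_of_hasDerivAt_of_nonneg
    (fun y => hasDerivAt_one_add_mul_rpow_sub_quadratic p 1 (p * (p - 1) / 2) y (by linarith)) hx
    fun y hy => by
      have := one_add_mul_self_le_rpow_one_add (s := y) (by linarith [hy.1]) (p := p - 1)
        (by linarith)
      simp only [one_mul]
      nlinarith [hy.1]
  simp only [one_mul, mul_zero, add_zero, Real.one_rpow] at h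
  linarith

lemma quadratic_le_one_sub_rpow {p : ℝ} (hp : 2 ≤ p) {e : ℝ} (he0 : 0 ≤ e) (he1 : e ≤ 1) :
    1 - p * e + (p - 1) / (2 * 2 ^ p) * e ^ 2 ≤ (1 - e) ^ p := by
  have h2p : 1 ≤ (2:ℝ) ^ p := Real.one_le_rpow one_le_two (by linarith)
  have hc : 2 * ((p - 1) / (2 * 2 ^ p)) ≤ p := by
    rw [mul_div_assoc', mul_div_mul_left _ _ two_ne_zero, div_le_iff₀ (by linarith)]
    nlinarith
  have h := le_of_hasDerivAt_of_nonneg (fun y => hasDerivAt_one_add_mul_rpow_sub_quadratic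
    p (-1) ((p - 1) / (2 * 2 ^ p)) y (by linarith)) he0
    fun y hy => by
      have : (1 + -1 * y) ^ (p - 1) ≤ 1 - y := by
        simpa [← sub_eq_add_neg] using Real.rpow_le_rpow_of_exponent_ge
          (by linarith [hy.2] : 0 < 1 - y) (by linarith [hy.1]) (by linarith : 1 ≤ p - 1)
      nlinarith [hy.1]
  simp only [neg_one_mul, mul_zero, add_zero, Real.one_rpow, ← sub_eq_add_neg] at h
  linarith

lemma one_add_rpow_le_quadratic {p : ℝ} (hp : 2 ≤ p) {x : ℝ} (hx0 : 0 ≤ x) (hx1 : x ≤ 1) :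
    (1 + x) ^ p ≤ 1 + p * x + p * 2 ^ (p - 1) * x ^ 2 := by
  have h := le_of_hasDerivAt_of_nonneg (fun y => (hasDerivAt_one_add_mul_rpow_sub_quadratic
    p 1 (p * 2 ^ (p - 1)) y (by linarith)).neg) hx0
    fun y hy => by
      -- the chord of the convex `z ↦ z ^ (p - 1)` over `[1, 2]`
      have hchord := (convexOn_rpow (p := p - 1) (by linarith)).2 (Set.mem_Ici.mpr zero_le_one)
        (Set.mem_Ici.mpr zero_le_two) (by linarith [hy.2] : 0 ≤ 1 - y) hy.1.le (by ring)
      simp only [smul_eq_mul, Real.one_rpow] at hchord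
      rw [show (1 - y) * 1 + y * 2 = 1 + 1 * y by ring] at hchord
      have := Real.rpow_pos_of_pos two_pos (p - 1)
      simp only [one_mul] at hchord ⊢
      nlinarith [mul_le_mul_of_nonneg_left hchord (by linarith : 0 ≤ p),
        mul_nonneg (mul_nonneg (by linarith : 0 ≤ p) this.le) hy.1.le,
        mul_nonneg (by linarith : 0 ≤ p) hy.1.le]
  simp only [Pi.neg_apply, one_mul, mul_zero, add_zero, Real.one_rpow] at h
  linarith

lemma one_sub_rpow_le_quadratic {p : ℝ} (hp : 2 ≤ p) {e : ℝ} (he0 : 0 ≤ e) (he1 : e ≤ 1) :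
    (1 - e) ^ p ≤ 1 - p * e + p * 2 ^ (p - 1) * e ^ 2 := by
  have h2p : p ≤ (2:ℝ) ^ (p - 1) := by
    have := one_add_mul_self_le_rpow_one_add (s := 1) (by norm_num) (p := p - 1) (by linarith)
    norm_num at this
    linarith
  have h := le_of_hasDerivAt_of_nonneg (fun y => (hasDerivAt_one_add_mul_rpow_sub_quadratic
    p (-1) (p * 2 ^ (p - 1)) y (by linarith)).neg) he0
    fun y hy => by
      have := one_add_mul_self_le_rpow_one_add (s := -1 * y) (by linarith [hy.2]) (p := p - 1)
        (by linarith)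
      simp only [neg_one_mul, ← sub_eq_add_neg] at this ⊢
      nlinarith [mul_le_mul_of_nonneg_left this (by linarith : 0 ≤ p),
        mul_nonneg (mul_nonneg (by linarith : 0 ≤ p) hy.1.le)
          (by linarith : 0 ≤ 2 * 2 ^ (p - 1) - (p - 1))]
  simp only [Pi.neg_apply, neg_one_mul, ← sub_eq_add_neg, sub_zero, Real.one_rpow] at h
  linarith

lemma gammaFn_abs (p t x : ℝ) : gammaFn p t |x| = gammaFn p t x := by
  simp only [gammaFn, abs_abs, sq_abs]

lemma gammaFn_zero_left {p : ℝ} (hp : p ≠ 0) (x : ℝ) : gammaFn p 0 x = |x| ^ p := by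
  unfold gammaFn
  split_ifs with h
  · simp [abs_nonpos_iff.mp h, Real.zero_rpow hp]
  · simp [Real.zero_rpow hp]

lemma gammaFn_nonneg {p : ℝ} (hp : 0 ≤ p) {t : ℝ} (ht : 0 ≤ t) (x : ℝ) :
    0 ≤ gammaFn p t x := by
  unfold gammaFn
  split_ifs with h
  · have := Real.rpow_nonneg ht (p - 2)
    positivity
  · have := Real.rpow_le_rpow ht (not_le.mp h).le hp
    have := Real.rpow_nonneg ht p
    nlinarith

lemma gammaFn_eq_rpow_mul_gammaFn_one {t : ℝ} (ht : 0 < t) (p x : ℝ) :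
    gammaFn p t x = t ^ p * gammaFn p 1 (x / t) := by
  have hsplit : t ^ p = t ^ (p - 2) * t ^ 2 := by
    rw [← Real.rpow_natCast, ← Real.rpow_add ht]
    norm_num
  have hcond : |x / t| ≤ 1 ↔ |x| ≤ t := by
    rw [abs_div, abs_of_pos ht, div_le_one ht]
  unfold gammaFn
  rw [Real.one_rpow, Real.one_rpow]
  split_ifs with h h' h'
  · rw [hsplit]; field_simp
  · exact absurd (hcond.mpr h) h'
  · exact absurd (hcond.mp h') h
  · rw [abs_div, abs_of_pos ht, Real.div_rpow (abs_nonneg x) ht.le]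
    field_simp

lemma gammaFn_one_mul_le {p : ℝ} (hp : 2 ≤ p) {l : ℝ} (hl0 : 0 ≤ l) (hl1 : l ≤ 1) (u : ℝ) :
    gammaFn p 1 (l * u) ≤ l ^ 2 * gammaFn p 1 u := by
  have habs : |l * u| = l * |u| := by rw [abs_mul, abs_of_nonneg hl0]
  unfold gammaFn
  rw [Real.one_rpow, Real.one_rpow, habs]
  split_ifs with hlu hu hu
  · linarith
  · have h := one_add_mul_self_le_rpow_one_add (s := u ^ 2 - 1) (by nlinarith) (p := p / 2)
      (by linarith)
    rw [add_sub_cancel, sq_rpow_div_two] at h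
    nlinarith [sq_nonneg l]
  · nlinarith
  · have hl : 0 < l := by
      by_contra h0
      simp [le_antisymm (not_lt.mp h0) hl0] at hlu
    have hlp : l ^ p = l ^ 2 * (l ^ 2) ^ ((p - 2) / 2) := by
      rw [← Real.rpow_natCast, ← Real.rpow_mul hl.le, ← Real.rpow_add hl]
      norm_num
      ring_nf
    have hw := one_add_mul_one_sub_le_rpow_neg (w := l ^ 2) (by positivity)
      (r := (p - 2) / 2) (by linarith)
    have hwr : (l ^ 2) ^ ((p - 2) / 2) * (l ^ 2) ^ (-((p - 2) / 2)) = 1 := by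
      rw [← Real.rpow_add (by positivity)]; simp
    have h1 : 1 ≤ (l * |u|) ^ p := Real.one_le_rpow (not_le.mp hlu).le (by linarith)
    rw [Real.mul_rpow hl0 (abs_nonneg u), hlp] at h1 ⊢
    set W := (l ^ 2) ^ ((p - 2) / 2)
    set V := (l ^ 2) ^ (-((p - 2) / 2))
    -- `l²|u|^p (1 - W) = l^p |u|^p (V - 1) ≥ V - 1 ≥ ((p - 2)/2)(1 - l²)`
    have hr : 0 ≤ (p - 2) / 2 * (1 - l ^ 2) := mul_nonneg (by linarith) (by nlinarith)
    nlinarith [mul_nonneg (sub_nonneg.mpr h1) (by linarith : 0 ≤ V - 1)]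

lemma gammaFn_mul_le {p : ℝ} (hp : 2 ≤ p) {t : ℝ} (ht : 0 ≤ t) {l : ℝ} (hl0 : 0 ≤ l)
    (hl1 : l ≤ 1) (x : ℝ) : gammaFn p t (l * x) ≤ l ^ 2 * gammaFn p t x := by
  rcases ht.eq_or_lt with rfl | ht
  · rw [gammaFn_zero_left (by linarith), gammaFn_zero_left (by linarith), abs_mul,
      abs_of_nonneg hl0, Real.mul_rpow hl0 (abs_nonneg x)]
    have : l ^ p ≤ l ^ 2 := by
      exact_mod_cast Real.rpow_le_rpow_of_exponent_ge' hl0 hl1 (by norm_num) hp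
    exact mul_le_mul_of_nonneg_right this (Real.rpow_nonneg (abs_nonneg x) p)
  · rw [gammaFn_eq_rpow_mul_gammaFn_one ht, gammaFn_eq_rpow_mul_gammaFn_one ht, mul_div_assoc,
      mul_left_comm]
    exact mul_le_mul_of_nonneg_left (gammaFn_one_mul_le hp hl0 hl1 _)
      (Real.rpow_nonneg ht.le p)

lemma gammaFn_neg (p t x : ℝ) : gammaFn p t (-x) = gammaFn p t x := by
  rw [← gammaFn_abs, abs_neg, gammaFn_abs]

lemma gammaFn_abs_left {a : ℝ} (ha : a ≠ 0) (p δ : ℝ) :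
    gammaFn p |a| δ = |a| ^ p * gammaFn p 1 (δ / a) := by
  rw [gammaFn_eq_rpow_mul_gammaFn_one (abs_pos.mpr ha), ← gammaFn_abs p 1 (δ / |a|), abs_div,
    abs_abs, ← abs_div, gammaFn_abs]

lemma one_add_mul_add_gammaFn_le_abs_one_add_rpow {p : ℝ} (hp : 2 ≤ p) (δ : ℝ) :
    1 + p * δ + (p - 1) / (p * 2 ^ p) * gammaFn p 1 δ ≤ |1 + δ| ^ p := by
  set κ := (p - 1) / (p * 2 ^ p) with hκ
  have hκ0 : 0 ≤ κ := div_nonneg (by linarith) (by positivity)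
  have hκp : κ * (p / 2) = (p - 1) / (2 * 2 ^ p) := by rw [hκ]; field_simp
  have hκ4 : κ ≤ 1 / 4 := div_mul_two_rpow_le_quarter hp
  unfold gammaFn
  rw [Real.one_rpow, Real.one_rpow]
  split_ifs with hδ
  · obtain ⟨hδ₁, hδ₂⟩ := abs_le.mp hδ
    rcases le_or_gt 0 δ with hδ0 | hδ0
    · have hc : κ * (p / 2) ≤ p * (p - 1) / 2 := by nlinarith
      rw [abs_of_nonneg (by linarith : (0:ℝ) ≤ 1 + δ)]
      nlinarith [quadratic_le_one_add_rpow hp hδ0, mul_le_mul_of_nonneg_right hc (sq_nonneg δ)]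
    · have h := quadratic_le_one_sub_rpow hp (e := -δ) (by linarith) (by linarith)
      rw [sub_neg_eq_add] at h
      rw [abs_of_nonneg (by linarith : (0:ℝ) ≤ 1 + δ),
        show κ * (p / 2 * 1 * δ ^ 2) = κ * (p / 2) * δ ^ 2 by ring, hκp]
      linarith
  · rcases le_or_gt 0 δ with hδ0 | hδ0
    · have hδ1 : 1 < δ := by rwa [abs_of_nonneg hδ0, not_le] at hδ
      have h := rpow_add_mul_rpow_sub_one_le_one_add_rpow (p := p) (by linarith)
        (by linarith : 0 < δ)
      have : δ ≤ δ ^ (p - 1) := by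
        simpa using Real.rpow_le_rpow_of_exponent_le hδ1.le (by linarith : 1 ≤ p - 1)
      have hδsq : 1 ≤ δ ^ 2 := by nlinarith
      rw [abs_of_nonneg hδ0, abs_of_nonneg (by linarith : (0:ℝ) ≤ 1 + δ)]
      nlinarith [quadratic_le_one_add_rpow hp hδ0,
        mul_le_mul_of_nonneg_left this (by linarith : 0 ≤ p),
        mul_le_mul_of_nonneg_right hκ4 (Real.rpow_nonneg hδ0 p),
        mul_le_mul_of_nonneg_left hδsq (by nlinarith : 0 ≤ p * (p - 1) / 2)]
    · have hδ1 : 1 < -δ := by rwa [abs_of_neg hδ0, not_le] at hδ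
      have h := rpow_add_le_two_rpow_mul (p := p) (by linarith) (a := -(1 + δ)) (b := 1)
        (by linarith) zero_le_one
      rw [Real.one_rpow, show -(1 + δ) + 1 = -δ by ring] at h
      rw [abs_of_neg hδ0, abs_of_neg (by linarith)]
      have hκ2p : κ * 2 ^ (p - 1) ≤ 1 / 2 := by
        rw [hκ, Real.rpow_sub_one two_ne_zero, div_mul_div_comm, div_le_iff₀ (by positivity)]
        nlinarith [Real.rpow_pos_of_pos two_pos p]
      have := Real.rpow_nonneg (by linarith : 0 ≤ -(1 + δ)) p
      nlinarith [mul_le_mul_of_nonneg_left h hκ0]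

lemma abs_one_add_rpow_le_one_add_mul_add_gammaFn {p : ℝ} (hp : 2 ≤ p) (δ : ℝ) :
    |1 + δ| ^ p ≤ 1 + p * δ + 2 ^ p * gammaFn p 1 δ := by
  have h2p := one_add_le_two_rpow hp
  have h2p' : (2:ℝ) ^ (p - 1) * 2 = 2 ^ p := by
    rw [← Real.rpow_add_one two_ne_zero]; norm_num
  unfold gammaFn
  rw [Real.one_rpow, Real.one_rpow]
  split_ifs with hδ
  · obtain ⟨hδ₁, hδ₂⟩ := abs_le.mp hδ
    have hc : 2 ^ p * (p / 2 * 1 * δ ^ 2) = p * 2 ^ (p - 1) * δ ^ 2 := by rw [← h2p']; ring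
    rcases le_or_gt 0 δ with hδ0 | hδ0
    · rw [abs_of_nonneg (by linarith : (0:ℝ) ≤ 1 + δ), hc]
      exact one_add_rpow_le_quadratic hp hδ0 hδ₂
    · have h := one_sub_rpow_le_quadratic hp (e := -δ) (by linarith) (by linarith)
      rw [sub_neg_eq_add, neg_sq] at h
      rw [abs_of_nonneg (by linarith : (0:ℝ) ≤ 1 + δ), hc]
      linarith
  · rcases le_or_gt 0 δ with hδ0 | hδ0
    · have hδ1 : 1 < δ := by rwa [abs_of_nonneg hδ0, not_le] at hδ
      have h : (1 + δ) ^ p ≤ 2 ^ p * δ ^ p := by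
        rw [← Real.mul_rpow zero_le_two hδ0]
        exact Real.rpow_le_rpow (by linarith) (by linarith) (by linarith)
      rw [abs_of_nonneg hδ0, abs_of_nonneg (by linarith : (0:ℝ) ≤ 1 + δ)]
      nlinarith
    · have hδ1 : 1 < -δ := by rwa [abs_of_neg hδ0, not_le] at hδ
      have h : (-(1 + δ)) ^ p ≤ (-δ) ^ p := Real.rpow_le_rpow (by linarith) (by linarith)
        (by linarith)
      have : -δ ≤ (-δ) ^ p := by
        simpa using Real.rpow_le_rpow_of_exponent_le hδ1.le (by linarith : 1 ≤ p)
      rw [abs_of_neg hδ0, abs_of_neg (by linarith)]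
      nlinarith

lemma abs_add_rpow_eq {a : ℝ} (ha : a ≠ 0) (p δ : ℝ) :
    |a + δ| ^ p = |a| ^ p * |1 + δ / a| ^ p := by
  rw [← Real.mul_rpow (abs_nonneg a) (abs_nonneg _), ← abs_mul, mul_add, mul_one,
    mul_div_cancel₀ _ ha]

lemma abs_rpow_sub_two_mul_mul_eq {a : ℝ} (ha : a ≠ 0) (p δ : ℝ) :
    p * |a| ^ (p - 2) * a * δ = |a| ^ p * (p * (δ / a)) := by
  have hpow : |a| ^ p = |a| ^ (p - 2) * a ^ 2 := by
    rw [← sq_abs, ← Real.rpow_natCast, ← Real.rpow_add (abs_pos.mpr ha)]; norm_num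
  rw [hpow]; field_simp

lemma abs_rpow_add_mul_add_gammaFn_le_abs_add_rpow {p : ℝ} (hp : 2 ≤ p) (a δ : ℝ) :
    |a| ^ p + p * |a| ^ (p - 2) * a * δ + (p - 1) / (p * 2 ^ p) * gammaFn p |a| δ
      ≤ |a + δ| ^ p := by
  rcases eq_or_ne a 0 with rfl | ha
  · have hκ := div_mul_two_rpow_le_quarter hp
    simp only [abs_zero, gammaFn_zero_left (by linarith : p ≠ 0),
      Real.zero_rpow (by linarith : p ≠ 0), zero_add, mul_zero, zero_mul]
    nlinarith [Real.rpow_nonneg (abs_nonneg δ) p]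
  · rw [gammaFn_abs_left ha, abs_add_rpow_eq ha, abs_rpow_sub_two_mul_mul_eq ha]
    have := mul_le_mul_of_nonneg_left (one_add_mul_add_gammaFn_le_abs_one_add_rpow hp (δ / a))
      (Real.rpow_nonneg (abs_nonneg a) p)
    linarith

lemma abs_add_rpow_le_abs_rpow_add_mul_add_gammaFn {p : ℝ} (hp : 2 ≤ p) (a δ : ℝ) :
    |a + δ| ^ p ≤ |a| ^ p + p * |a| ^ (p - 2) * a * δ + 2 ^ p * gammaFn p |a| δ := by
  rcases eq_or_ne a 0 with rfl | ha
  · simp only [abs_zero, gammaFn_zero_left (by linarith : p ≠ 0),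
      Real.zero_rpow (by linarith : p ≠ 0), zero_add, mul_zero, zero_mul]
    nlinarith [Real.rpow_nonneg (abs_nonneg δ) p, one_add_le_two_rpow hp]
  · rw [gammaFn_abs_left ha, abs_add_rpow_eq ha, abs_rpow_sub_two_mul_mul_eq ha]
    have := mul_le_mul_of_nonneg_left (abs_one_add_rpow_le_one_add_mul_add_gammaFn hp (δ / a))
      (Real.rpow_nonneg (abs_nonneg a) p)
    linarith

lemma abs_rpow_sub_abs_sub_rpow_le {p : ℝ} (hp : 2 ≤ p) (a y : ℝ) :
    |a| ^ p - |a - y| ^ p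
      ≤ p * |a| ^ (p - 2) * a * y - (p - 1) / (p * 2 ^ p) * gammaFn p |a| y := by
  have h := abs_rpow_add_mul_add_gammaFn_le_abs_add_rpow hp a (-y)
  rw [gammaFn_neg, ← sub_eq_add_neg] at h
  linarith

lemma abs_sub_mul_rpow_le {p : ℝ} (hp : 2 ≤ p) {l : ℝ} (hl0 : 0 ≤ l) (hl1 : l ≤ 1)
    (hl : 2 ^ p * l ≤ (p - 1) / (p * 2 ^ p)) (a y : ℝ) :
    |a - l * y| ^ p
      ≤ |a| ^ p - l * (p * |a| ^ (p - 2) * a * y - (p - 1) / (p * 2 ^ p) * gammaFn p |a| y) := by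
  have h := abs_add_rpow_le_abs_rpow_add_mul_add_gammaFn hp a (-(l * y))
  rw [gammaFn_neg, ← sub_eq_add_neg] at h
  have hγ := gammaFn_mul_le hp (abs_nonneg a) hl0 hl1 y
  have hγ0 := mul_nonneg hl0 (gammaFn_nonneg (by linarith : (0:ℝ) ≤ p) (abs_nonneg a) y)
  have h2p := Real.rpow_nonneg zero_le_two p
  nlinarith [mul_le_mul_of_nonneg_right hl hγ0, mul_le_mul_of_nonneg_left hγ h2p]

noncomputable def lpObjective {n d : ℕ} (p : ℝ) (A : Matrix (Fin n) (Fin d) ℝ) (b : Fin n → ℝ)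
    (x : Fin d → ℝ) : ℝ :=
  ∑ i, |(A.mulVec x - b) i| ^ p

section Residual

variable {n d : ℕ} {p : ℝ} (A : Matrix (Fin n) (Fin d) ℝ) (b : Fin n → ℝ)

lemma resObj_eq_sum (x Δ : Fin d → ℝ) :
    resObj p A b x Δ = ∑ i, (p * |(A.mulVec x - b) i| ^ (p - 2) * (A.mulVec x - b) i
      * (A.mulVec Δ) i
      - (p - 1) / (p * 2 ^ p) * gammaFn p |(A.mulVec x - b) i| ((A.mulVec Δ) i)) := by
  rw [resObj, Finset.mul_sum, ← Finset.sum_sub_distrib]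

lemma lpObjective_sub_le_resObj (hp : 2 ≤ p) (x z : Fin d → ℝ) :
    lpObjective p A b x - lpObjective p A b z ≤ resObj p A b x (x - z) := by
  rw [resObj_eq_sum, lpObjective, lpObjective, ← Finset.sum_sub_distrib]
  refine Finset.sum_le_sum fun i _ => ?_
  have : (A.mulVec z - b) i = (A.mulVec x - b) i - (A.mulVec (x - z)) i := by
    simp only [mulVec_sub, Pi.sub_apply]; ring
  rw [this]
  exact abs_rpow_sub_abs_sub_rpow_le hp _ _

lemma lpObjective_sub_smul_le (hp : 2 ≤ p) {l : ℝ} (hl0 : 0 ≤ l) (hl1 : l ≤ 1)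
    (hl : 2 ^ p * l ≤ (p - 1) / (p * 2 ^ p)) (x Δ : Fin d → ℝ) :
    lpObjective p A b (x - l • Δ) ≤ lpObjective p A b x - l * resObj p A b x Δ := by
  rw [resObj_eq_sum, Finset.mul_sum, lpObjective, lpObjective, ← Finset.sum_sub_distrib]
  refine Finset.sum_le_sum fun i _ => ?_
  have : (A.mulVec (x - l • Δ) - b) i = (A.mulVec x - b) i - l * (A.mulVec Δ) i := by
    simp only [mulVec_sub, mulVec_smul, Pi.sub_apply, Pi.smul_apply, smul_eq_mul]; ring
  rw [this]
  exact abs_sub_mul_rpow_le hp hl0 hl1 hl _ _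

lemma lpObjective_sub_smul_sub_le (hp : 2 ≤ p) {l : ℝ} (hl0 : 0 ≤ l) (hl1 : l ≤ 1)
    (hl : 2 ^ p * l ≤ (p - 1) / (p * 2 ^ p)) {α : ℝ} (hα : 0 < α) {x z Δ : Fin d → ℝ} {M : ℝ}
    (hM : resObj p A b x (x - z) ≤ M) (hΔ : 1 / α * M ≤ resObj p A b x Δ) :
    lpObjective p A b (x - l • Δ) - lpObjective p A b z
      ≤ (1 - l / α) * (lpObjective p A b x - lpObjective p A b z) := by
  have hlα : 0 ≤ l / α := div_nonneg hl0 hα.le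
  have hgap := mul_le_mul_of_nonneg_left ((lpObjective_sub_le_resObj A b hp x z).trans hM) hlα
  have hdecr := mul_le_mul_of_nonneg_left hΔ hl0
  have := lpObjective_sub_smul_le A b hp hl0 hl1 hl x Δ
  rw [← mul_assoc, mul_one_div] at hdecr
  linarith

end Residual

lemma Finset.sum_rpow_le_rpow_sum {ι : Type*} (s : Finset ι) {f : ι → ℝ} (hf : ∀ i ∈ s, 0 ≤ f i)
    {q : ℝ} (hq : 1 ≤ q) : ∑ i ∈ s, f i ^ q ≤ (∑ i ∈ s, f i) ^ q := by
  classical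
  induction s using Finset.induction_on with
  | empty => simp [Real.zero_rpow (by linarith : q ≠ 0)]
  | insert j s hj ih =>
    rw [Finset.sum_insert hj, Finset.sum_insert hj]
    have hs := fun i hi => hf i (Finset.mem_insert_of_mem hi)
    calc f j ^ q + ∑ i ∈ s, f i ^ q ≤ f j ^ q + (∑ i ∈ s, f i) ^ q := by gcongr; exact ih hs
      _ ≤ (f j + ∑ i ∈ s, f i) ^ q := Real.add_rpow_le_rpow_add
          (hf j (Finset.mem_insert_self j s)) (Finset.sum_nonneg hs) hq

section PNormVsTwoNorm

variable {ι : Type*} [Fintype ι] {p : ℝ}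

lemma sum_abs_rpow_le_sum_sq_rpow (hp : 2 ≤ p) (y : ι → ℝ) :
    ∑ i, |y i| ^ p ≤ (∑ i, y i ^ 2) ^ (p / 2) := by
  simpa only [sq_rpow_div_two] using
    Finset.univ.sum_rpow_le_rpow_sum (fun i _ => sq_nonneg (y i)) (by linarith : 1 ≤ p / 2)

lemma sum_sq_rpow_le_card_rpow_mul_sum_abs_rpow (hp : 2 ≤ p) (y : ι → ℝ) :
    (∑ i, y i ^ 2) ^ (p / 2) ≤ (Fintype.card ι : ℝ) ^ ((p - 2) / 2) * ∑ i, |y i| ^ p := by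
  have := Real.rpow_sum_le_const_mul_sum_rpow_of_nonneg (s := Finset.univ)
    (by linarith : 1 ≤ p / 2) (fun i _ => sq_nonneg (y i))
  simpa only [sq_rpow_div_two, Finset.card_univ, show p / 2 - 1 = (p - 2) / 2 by ring] using this

lemma sum_abs_rpow_le_of_sum_sq_le (hp : 2 ≤ p) {y w : ι → ℝ}
    (h : ∑ i, y i ^ 2 ≤ ∑ i, w i ^ 2) :
    ∑ i, |y i| ^ p ≤ (Fintype.card ι : ℝ) ^ ((p - 2) / 2) * ∑ i, |w i| ^ p :=
  calc ∑ i, |y i| ^ p ≤ (∑ i, y i ^ 2) ^ (p / 2) := sum_abs_rpow_le_sum_sq_rpow hp y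
    _ ≤ (∑ i, w i ^ 2) ^ (p / 2) :=
        Real.rpow_le_rpow (Finset.sum_nonneg fun i _ => sq_nonneg (y i)) h (by linarith)
    _ ≤ _ := sum_sq_rpow_le_card_rpow_mul_sum_abs_rpow hp w

end PNormVsTwoNorm

lemma two_rpow_mul_le_of_rpow_min_le {p : ℝ} (hp : 2 ≤ p) {l : ℝ}
    (hl : l ^ min 1 (p - 1) ≤ (p - 1) / (p * 4 ^ p)) : 2 ^ p * l ≤ (p - 1) / (p * 2 ^ p) := by
  have h4 : (4:ℝ) ^ p = 2 ^ p * 2 ^ p := by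
    rw [← Real.mul_rpow zero_le_two zero_le_two]; norm_num
  rw [min_eq_left (by linarith), Real.rpow_one, h4, ← mul_assoc, ← div_div,
    le_div_iff₀ (Real.rpow_pos_of_pos two_pos p)] at hl
  linarith

lemma le_pow_mul_of_le_mul {e : ℕ → ℝ} {c B : ℝ} (hc : 0 ≤ c) (h0 : e 0 ≤ B)
    (hs : ∀ t, e (t + 1) ≤ c * e t) (t : ℕ) : e t ≤ c ^ t * B := by
  induction t with
  | zero => simpa using h0
  | succ t ih =>
    calc e (t + 1) ≤ c * e t := hs t
      _ ≤ c * (c ^ t * B) := mul_le_mul_of_nonneg_left ih hc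
      _ = c ^ (t + 1) * B := by ring

/-- convergence of the residual iteration.  If `OPT = min_{Cz=v}‖Az−b‖_p^p`,
`x⁽⁰⁾` minimizes `‖Ax−b‖₂²` subject to `Cx=v`, each `Δ̃⁽ᵗ⁾` is an `α`-approximate solution
of the residual problem at `x⁽ᵗ⁾`, `x⁽ᵗ⁺¹⁾ = x⁽ᵗ⁾ − λΔ̃⁽ᵗ⁾` with `λ ∈ (0,1]` and
`λ^{min{1,p−1}} ≤ (p−1)/(p·4^p)`, then for every `t`:
`‖Ax⁽ᵗ⁾−b‖_p^p − OPT ≤ (1 − λ/α)^t (n^{(p−2)/2} − 1) OPT`. -/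
theorem stmt10 (n d : ℕ) (p : ℝ) (hp : 2 ≤ p)
    (A : Matrix (Fin n) (Fin d) ℝ) (b : Fin n → ℝ)
    (C : Matrix (Fin d) (Fin d) ℝ) (v : Fin d → ℝ)
    (OPT : ℝ)
    (hOPT : IsLeast ((fun z => ∑ i, |(A.mulVec z - b) i| ^ p) '' {z | C.mulVec z = v}) OPT)
    (α : ℝ) (hα : 1 ≤ α)
    (lam : ℝ) (hlam0 : 0 < lam) (hlam1 : lam ≤ 1)
    (hlam : lam ^ (min 1 (p - 1)) ≤ (p - 1) / (p * 4 ^ p))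
    (x : ℕ → Fin d → ℝ) (Δt : ℕ → Fin d → ℝ) (M : ℕ → ℝ)
    (hx0F : C.mulVec (x 0) = v)
    (hx0Min : ∀ z, C.mulVec z = v →
      ∑ i, ((A.mulVec (x 0) - b) i) ^ 2 ≤ ∑ i, ((A.mulVec z - b) i) ^ 2)
    (hM : ∀ t, IsGreatest
      ((fun Δ => resObj p A b (x t) Δ) '' {Δ | C.mulVec Δ = 0}) (M t))
    (hΔtF : ∀ t, C.mulVec (Δt t) = 0)
    (hΔtApprox : ∀ t, (1 / α) * M t ≤ resObj p A b (x t) (Δt t))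
    (hiter : ∀ t, x (t + 1) = x t - lam • Δt t) :
    ∀ t : ℕ, ∑ i, |(A.mulVec (x t) - b) i| ^ p - OPT
      ≤ (1 - lam / α) ^ t * ((n : ℝ) ^ ((p - 2) / 2) - 1) * OPT := by
  obtain ⟨z, hzC, hzOPT⟩ := hOPT.1
  change lpObjective p A b z = OPT at hzOPT
  have hfeas : ∀ t, C.mulVec (x t) = v := by
    intro t
    induction t with
    | zero => exact hx0F
    | succ t ih => rw [hiter t, mulVec_sub, mulVec_smul, hΔtF t, smul_zero, sub_zero, ih]
  have hstep : ∀ t, lpObjective p A b (x (t + 1)) - OPT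
      ≤ (1 - lam / α) * (lpObjective p A b (x t) - OPT) := fun t => by
    rw [hiter t, ← hzOPT]
    refine lpObjective_sub_smul_sub_le A b hp hlam0.le hlam1
      (two_rpow_mul_le_of_rpow_min_le hp hlam) (by linarith) ((hM t).2 ⟨x t - z, ?_, rfl⟩)
      (hΔtApprox t)
    change C.mulVec (x t - z) = 0
    rw [mulVec_sub, hfeas t, hzC, sub_self]
  have hbase : lpObjective p A b (x 0) ≤ (n : ℝ) ^ ((p - 2) / 2) * OPT := by
    have h := sum_abs_rpow_le_of_sum_sq_le hp (hx0Min z hzC)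
    rw [Fintype.card_fin] at h
    rwa [← hzOPT]
  have hrate : 0 ≤ 1 - lam / α := by rw [sub_nonneg, div_le_one (by linarith)]; linarith
  intro t
  rw [mul_assoc]
  exact le_pow_mul_of_le_mul (e := fun t => lpObjective p A b (x t) - OPT) hrate
    (by linarith) hstep t
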